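/- arXiv:0911.4373 — 4 statements merged into one kernel-verified Lean document; each statement's English description precedes it below -/
import Mathlib

section
/- Let f_1, ..., f_k be pairwise distinct affine functions on a nonempty open set U in ℝ^n. Then there exist a constant c > 0, an index i ∈ {1,...,k}, and a nonempty open subset V of U such that f_i(x) + c < f_j(x) for all x ∈ V and all j ≠ i. -/
/-!
Distinct affine functions are distinct analytic functions on the connected space ℝⁿ, so by the
identity theorem any two of them agree only on a closed set with empty interior. Finitely many
such sets cannot cover the open set `U`, so at some `x₀ ∈ U` the values `f j x₀` are pairwise
distinct. The `f i` with the smallest value at `x₀` lies below every other `f j` by a uniform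
margin `c` at `x₀`, hence, by continuity, on a whole neighbourhood of `x₀`.
-/

/-- An affine function on ℝⁿ: `x ↦ a₀ + Σ aᵢ xᵢ`. -/
def IsAffineFn {n : ℕ} (f : (Fin n → ℝ) → ℝ) : Prop :=
  ∃ (a₀ : ℝ) (a : Fin n → ℝ), ∀ x, f x = a₀ + ∑ i, a i * x i

open Set Filter Topology Function

theorem IsAffineFn.analyticOnNhd {n : ℕ} {f : (Fin n → ℝ) → ℝ} (hf : IsAffineFn f) :
    AnalyticOnNhd ℝ f univ := by
  obtain ⟨a₀, a, ha⟩ := hf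
  rw [funext ha]
  refine analyticOnNhd_const.add (Finset.analyticOnNhd_fun_sum _ fun i _ => ?_)
  exact analyticOnNhd_const.mul
    ((ContinuousLinearMap.proj (R := ℝ) (φ := fun _ : Fin n => ℝ) i).analyticOnNhd _)

theorem interior_setOf_eq_eq_empty_of_analyticOnNhd {𝕜 E F : Type*}
    [NontriviallyNormedField 𝕜] [NormedAddCommGroup E] [NormedSpace 𝕜 E] [PreconnectedSpace E]
    [NormedAddCommGroup F] [NormedSpace 𝕜 F] {f g : E → F}
    (hf : AnalyticOnNhd 𝕜 f univ) (hg : AnalyticOnNhd 𝕜 g univ) (hfg : f ≠ g) :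
    interior {x | f x = g x} = ∅ :=
  eq_empty_of_forall_notMem fun _ hx =>
    hfg (hf.eq_of_eventuallyEq hg (mem_interior_iff_mem_nhds.1 hx))

theorem dense_setOf_injective_eval {ι E β : Type*} [Finite ι] [TopologicalSpace E]
    [TopologicalSpace β] [T2Space β] {f : ι → E → β} (hf : ∀ i, Continuous (f i))
    (hint : ∀ i j, i ≠ j → interior {x | f i x = f j x} = ∅) :
    Dense {x | Injective fun i => f i x} := by
  let S : {p : ι × ι // p.1 ≠ p.2} → Set E := fun p => {x | f p.1.1 x ≠ f p.1.2 x}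
  have hS : Dense (⋂₀ range S) :=
    (finite_range S).dense_sInter
      (forall_mem_range.2 fun _ => isOpen_ne_fun (hf _) (hf _))
      (forall_mem_range.2 fun p => interior_eq_empty_iff_dense_compl.1 (hint _ _ p.2))
  refine hS.mono fun x hx i j hij => by_contra fun hne => ?_
  exact mem_sInter.1 hx (S ⟨(i, j), hne⟩) (mem_range_self _) hij

theorem exists_pos_forall_add_lt {ι : Type*} [Finite ι] {a : ι → ℝ} {i : ι}
    (h : ∀ j, j ≠ i → a i < a j) : ∃ c, 0 < c ∧ ∀ j, j ≠ i → a i + c < a j := by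
  have hc : ∀ᶠ c in 𝓝[>] (0 : ℝ), 0 < c ∧ ∀ j, j ≠ i → a i + c < a j := by
    refine Eventually.and self_mem_nhdsWithin (eventually_all.2 fun j => ?_)
    by_cases hj : j = i
    · exact .of_forall fun _ h => absurd hj h
    · exact nhdsWithin_le_nhds <| (eventually_lt_nhds (sub_pos.2 (h j hj))).mono
        fun c hc _ => by linarith
  exact hc.exists

theorem exists_isOpen_forall_add_lt {ι E : Type*} [Finite ι] [TopologicalSpace E]
    {f : ι → E → ℝ} (hf : ∀ i, Continuous (f i)) {U : Set E} (hU : IsOpen U) {x₀ : E}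
    (hx₀ : x₀ ∈ U) {i : ι} (hi : ∀ j, j ≠ i → f i x₀ < f j x₀) :
    ∃ (c : ℝ) (V : Set E), 0 < c ∧ V ⊆ U ∧ IsOpen V ∧ V.Nonempty ∧
      ∀ x ∈ V, ∀ j, j ≠ i → f i x + c < f j x := by
  obtain ⟨c, hc, hgap⟩ := exists_pos_forall_add_lt (a := fun j => f j x₀) hi
  refine ⟨c, U ∩ ⋂ j ∈ {j | j ≠ i}, {x | f i x + c < f j x}, hc, inter_subset_left,
    hU.inter ((toFinite _).isOpen_biInter fun j _ => isOpen_lt (by fun_prop) (hf j)),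
    ⟨x₀, hx₀, mem_iInter₂.2 hgap⟩, fun x hx j hj => mem_iInter₂.1 hx.2 j hj⟩

theorem exists_isOpen_forall_add_lt_of_interior_eq_empty {ι E : Type*} [Finite ι] [Nonempty ι]
    [TopologicalSpace E] {f : ι → E → ℝ} (hf : ∀ i, Continuous (f i))
    (hint : ∀ i j, i ≠ j → interior {x | f i x = f j x} = ∅) {U : Set E} (hU : IsOpen U)
    (hUne : U.Nonempty) :
    ∃ (c : ℝ) (i : ι) (V : Set E), 0 < c ∧ V ⊆ U ∧ IsOpen V ∧ V.Nonempty ∧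
      ∀ x ∈ V, ∀ j, j ≠ i → f i x + c < f j x := by
  obtain ⟨x₀, hinj, hx₀⟩ := (dense_setOf_injective_eval hf hint).exists_mem_open hU hUne
  obtain ⟨i, hmin⟩ := Finite.exists_min fun j => f j x₀
  have hlt : ∀ j, j ≠ i → f i x₀ < f j x₀ := fun j hj =>
    (hmin j).lt_of_ne fun h => hj (hinj h).symm
  obtain ⟨c, V, hV⟩ := exists_isOpen_forall_add_lt hf hU hx₀ hlt
  exact ⟨c, i, V, hV⟩

theorem affine_dominance {n k : ℕ} (U : Set (Fin n → ℝ)) (hU : IsOpen U)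
    (hUne : U.Nonempty) (f : Fin k → (Fin n → ℝ) → ℝ)
    (haff : ∀ i, IsAffineFn (f i))
    (hdist : ∀ i j, i ≠ j → f i ≠ f j) (hk : 0 < k) :
    ∃ (c : ℝ) (i : Fin k) (V : Set (Fin n → ℝ)),
      0 < c ∧ V ⊆ U ∧ IsOpen V ∧ V.Nonempty ∧
      ∀ x ∈ V, ∀ j, j ≠ i → f i x + c < f j x := by
  have : Nonempty (Fin k) := ⟨⟨0, hk⟩⟩
  have hanalytic : ∀ i, AnalyticOnNhd ℝ (f i) univ := fun i => (haff i).analyticOnNhd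
  exact exists_isOpen_forall_add_lt_of_interior_eq_empty
    (fun i => continuousOn_univ.1 (hanalytic i).continuousOn)
    (fun i j hij => interior_setOf_eq_eq_empty_of_analyticOnNhd (hanalytic i) (hanalytic j)
      (hdist i j hij))
    hU hUne
end

section
/- Let β = (β_1,...,β_n) ∈ ℝ^n with β ≠ 0, let ε ∈ (0,1), and let 0 < p_i < q_i for i = 2,...,n. Suppose the function (t_1,...,t_n) ↦ t_1^{β_1 + Σ_{i=2}^n β_i t_i} is bounded on (0,ε) × ∏_{i=2}^n (p_i,q_i). Then there exist subintervals (p_i',q_i') ⊆ (p_i,q_i) with p_i' < q_i' and a constant c > 0 such that β_1 + Σ_{i=2}^n β_i t_i ≥ c on ∏ (p_i',q_i'), and hence 0 < t_1^{β_1 + Σ β_i t_i} ≤ t_1^c on (0,ε) × ∏ (p_i',q_i'), so the function tends to 0 uniformly as t_1 → 0. -/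
open Real Set Finset

theorem bounded_monomial_shrink {n : ℕ} (β : Fin (n + 1) → ℝ) (hβ : β ≠ 0)
    (ε : ℝ) (hε : ε ∈ Ioo (0:ℝ) 1)
    (p q : Fin (n + 1) → ℝ) (hpq : ∀ i : Fin (n + 1), i ≠ 0 → 0 < p i ∧ p i < q i)
    (M : ℝ)
    (hbdd : ∀ t : Fin (n + 1) → ℝ, t 0 ∈ Ioo 0 ε →
      (∀ i : Fin (n + 1), i ≠ 0 → t i ∈ Ioo (p i) (q i)) →
      (t 0) ^ (β 0 + ∑ i ∈ Finset.univ.filter (· ≠ (0 : Fin (n + 1))), β i * t i) ≤ M) :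
    ∃ p' q' : Fin (n + 1) → ℝ,
      (∀ i : Fin (n + 1), i ≠ 0 → p i ≤ p' i ∧ p' i < q' i ∧ q' i ≤ q i) ∧
      ∃ c : ℝ, 0 < c ∧
        (∀ t : Fin (n + 1) → ℝ,
          (∀ i : Fin (n + 1), i ≠ 0 → t i ∈ Ioo (p' i) (q' i)) →
          c ≤ β 0 + ∑ i ∈ Finset.univ.filter (· ≠ (0 : Fin (n + 1))), β i * t i) ∧
        (∀ t : Fin (n + 1) → ℝ, t 0 ∈ Ioo 0 ε →
          (∀ i : Fin (n + 1), i ≠ 0 → t i ∈ Ioo (p' i) (q' i)) →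
          0 < (t 0) ^ (β 0 + ∑ i ∈ Finset.univ.filter (· ≠ (0 : Fin (n + 1))), β i * t i) ∧
          (t 0) ^ (β 0 + ∑ i ∈ Finset.univ.filter (· ≠ (0 : Fin (n + 1))), β i * t i)
            ≤ (t 0) ^ c) := by
  classical
  set S : Finset (Fin (n+1)) := Finset.univ.filter (· ≠ (0 : Fin (n + 1))) with hSdef
  set f : (Fin (n + 1) → ℝ) → ℝ := fun t => β 0 + ∑ i ∈ S, β i * t i with hfdef
  have hfe : ∀ t : Fin (n+1) → ℝ,
      β 0 + ∑ i ∈ S, β i * t i = f t := fun t => rfl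
  -- Step 1: exponent is nonnegative on the box
  have hnonneg : ∀ t : Fin (n+1) → ℝ,
      (∀ i : Fin (n+1), i ≠ 0 → t i ∈ Ioo (p i) (q i)) → 0 ≤ f t := by
    intro t ht
    by_contra h
    push_neg at h
    set a : ℝ := -(f t) with ha
    have ha0 : 0 < a := by simp only [ha]; linarith
    have hane : a ≠ 0 := ne_of_gt ha0
    have hM1 : (0:ℝ) < max M 1 + 1 := by
      have := le_max_right M 1; linarith
    set t0 : ℝ := min (ε/2) ((max M 1 + 1) ^ (-(1/a))) with ht0def
    have ht0pos : 0 < t0 := lt_min (by linarith [hε.1]) (Real.rpow_pos_of_pos hM1 _)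
    have ht0ε : t0 < ε := lt_of_le_of_lt (min_le_left _ _) (by linarith [hε.1])
    set t' := Function.update t 0 t0 with ht'def
    have ht'0 : t' 0 = t0 := Function.update_self _ _ _
    have hft' : f t' = f t := by
      simp only [hfdef]
      congr 1
      apply Finset.sum_congr rfl
      intro i hi
      simp only [hSdef, Finset.mem_filter] at hi
      rw [ht'def, Function.update_of_ne hi.2]
    have hb := hbdd t' (by rw [ht'0]; exact ⟨ht0pos, ht0ε⟩)
      (fun i hi => by rw [ht'def, Function.update_of_ne hi]; exact ht i hi)
    rw [hfe t', ht'0, hft'] at hb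
    -- show t0 ^ (f t) > M, contradiction
    have h1 : t0 ≤ (max M 1 + 1) ^ (-(1/a)) := min_le_right _ _
    have h2 : t0 ^ a ≤ ((max M 1 + 1) ^ (-(1/a))) ^ a :=
      Real.rpow_le_rpow ht0pos.le h1 ha0.le
    have h3 : ((max M 1 + 1) ^ (-(1/a))) ^ a = (max M 1 + 1)⁻¹ := by
      rw [← Real.rpow_mul hM1.le]
      have : -(1/a) * a = -1 := by field_simp
      rw [this, Real.rpow_neg_one]
    rw [h3] at h2
    have h4 : 0 < t0 ^ a := Real.rpow_pos_of_pos ht0pos a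
    have h5 : max M 1 + 1 ≤ (t0 ^ a)⁻¹ := by
      rw [← inv_inv (max M 1 + 1)]
      exact inv_anti₀ h4 h2
    have h6 : t0 ^ f t = (t0 ^ a)⁻¹ := by
      rw [show f t = -a by simp [ha], Real.rpow_neg ht0pos.le]
    rw [h6] at hb
    have := le_max_left M 1
    linarith
  -- Step 2: find a point in the box with positive exponent value
  set m : Fin (n+1) → ℝ := fun i => (p i + q i) / 2 with hmdef
  have hm : ∀ i : Fin (n+1), i ≠ 0 → m i ∈ Ioo (p i) (q i) := by
    intro i hi
    obtain ⟨h1, h2⟩ := hpq i hi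
    constructor <;> simp only [hmdef] <;> linarith
  have hexists : ∃ ts : Fin (n+1) → ℝ,
      (∀ i : Fin (n+1), i ≠ 0 → ts i ∈ Ioo (p i) (q i)) ∧ 0 < f ts := by
    by_cases hA : ∃ j : Fin (n+1), j ≠ 0 ∧ β j ≠ 0
    · obtain ⟨j, hj0, hjβ⟩ := hA
      set d : ℝ := (q j - p j) / 4 with hddef
      have hd0 : 0 < d := by
        have := (hpq j hj0).2; simp only [hddef]; linarith
      set s : ℝ := if 0 < β j then d else -d with hsdef
      set ts := Function.update m j (m j + s) with htsdef
      have hjS : j ∈ S := by simp [hSdef, hj0]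
      have htsmem : ∀ i : Fin (n+1), i ≠ 0 → ts i ∈ Ioo (p i) (q i) := by
        intro i hi
        by_cases hij : i = j
        · subst hij
          rw [htsdef, Function.update_self]
          obtain ⟨h1, h2⟩ := hpq i hi
          constructor <;> simp only [hsdef, hmdef, hddef] <;> split <;> linarith
        · rw [htsdef, Function.update_of_ne hij]; exact hm i hi
      refine ⟨ts, htsmem, ?_⟩
      have hsum : f ts = f m + β j * s := by
        simp only [hfdef]
        rw [← Finset.add_sum_erase S _ hjS, ← Finset.add_sum_erase S (fun i => β i * m i) hjS]
        have h1 : ts j = m j + s := by rw [htsdef, Function.update_self]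
        have h2 : ∑ i ∈ S.erase j, β i * ts i = ∑ i ∈ S.erase j, β i * m i := by
          apply Finset.sum_congr rfl
          intro i hi
          rw [htsdef, Function.update_of_ne (Finset.ne_of_mem_erase hi)]
        rw [h1, h2]; ring
      have hβs : 0 < β j * s := by
        simp only [hsdef]
        rcases lt_trichotomy (β j) 0 with h | h | h
        · rw [if_neg (by linarith)]; exact mul_pos_of_neg_of_neg h (by linarith)
        · exact absurd h hjβ
        · rw [if_pos h]; exact mul_pos h hd0
      have := hnonneg m hm
      rw [hsum]; linarith
    · push_neg at hA
      have hβ0 : β 0 ≠ 0 := by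
        intro h0
        apply hβ
        funext i
        by_cases hi : i = 0
        · rw [hi]; exact h0
        · exact hA i hi
      have hfm : f m = β 0 := by
        simp only [hfdef]
        have : ∑ i ∈ S, β i * m i = 0 := by
          apply Finset.sum_eq_zero
          intro i hi
          simp only [hSdef, Finset.mem_filter] at hi
          rw [hA i hi.2, zero_mul]
        rw [this, add_zero]
      refine ⟨m, hm, ?_⟩
      rw [hfm]
      have := hnonneg m hm
      rw [hfm] at this
      exact lt_of_le_of_ne this (Ne.symm hβ0)
  obtain ⟨ts, htsmem, htspos⟩ := hexists
  -- Step 3: construct the subbox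
  set B : ℝ := ∑ i ∈ S, |β i| with hBdef
  have hB0 : 0 ≤ B := Finset.sum_nonneg fun i _ => abs_nonneg _
  set c : ℝ := f ts with hcdef
  set r : ℝ := c / (2 * (B + 1)) with hrdef
  have hr0 : 0 < r := by
    apply div_pos htspos; positivity
  set p' : Fin (n+1) → ℝ := fun i => max (p i) (ts i - r) with hp'def
  set q' : Fin (n+1) → ℝ := fun i => min (q i) (ts i + r) with hq'def
  have key : ∀ t : Fin (n+1) → ℝ,
      (∀ i : Fin (n+1), i ≠ 0 → t i ∈ Ioo (p' i) (q' i)) → c / 2 ≤ f t := by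
    intro t ht
    have hdiff : f ts - f t = ∑ i ∈ S, β i * (ts i - t i) := by
      simp only [hfdef, mul_sub, Finset.sum_sub_distrib]; ring
    have hbound : f ts - f t ≤ B * r := by
      rw [hdiff, hBdef, Finset.sum_mul]
      apply Finset.sum_le_sum
      intro i hi
      simp only [hSdef, Finset.mem_filter] at hi
      obtain ⟨h1, h2⟩ := ht i hi.2
      have habs : |ts i - t i| ≤ r := by
        rw [abs_le]
        constructor
        · have := lt_min_iff.mp h2; linarith [this.2]
        · have := max_lt_iff.mp h1; linarith [this.2]
      calc β i * (ts i - t i) ≤ |β i * (ts i - t i)| := le_abs_self _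
        _ = |β i| * |ts i - t i| := abs_mul _ _
        _ ≤ |β i| * r := mul_le_mul_of_nonneg_left habs (abs_nonneg _)
    have hBr : B * r ≤ c / 2 := by
      rw [hrdef]
      rw [show B * (c / (2 * (B + 1))) = B * c / (2 * (B + 1)) by ring,
        div_le_div_iff₀ (by positivity) two_pos]
      nlinarith [htspos]
    have hc : c - f t ≤ c / 2 := hcdef ▸ (hbound.trans hBr)
    linarith [hc]
  refine ⟨p', q', ?_, c / 2, by positivity, ?_, ?_⟩
  · intro i hi
    obtain ⟨h1, h2⟩ := htsmem i hi
    refine ⟨le_max_left _ _, ?_, min_le_left _ _⟩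
    exact max_lt_iff.mpr ⟨lt_min_iff.mpr ⟨(hpq i hi).2, by linarith⟩,
      lt_min_iff.mpr ⟨by linarith, by linarith⟩⟩
  · intro t ht
    rw [hfe t]
    exact key t ht
  · intro t ht0 ht
    have hfge : c / 2 ≤ f t := key t ht
    constructor
    · exact Real.rpow_pos_of_pos ht0.1 _
    · rw [hfe t]
      exact Real.rpow_le_rpow_of_exponent_ge ht0.1 (by linarith [ht0.2, hε.2]) (by linarith)
end

section
/- Let f(y) = Σ_{i=1}^k c_i y^{r_i}(log y)^{ℓ_i} on (1,∞) with c_i ∈ ℝ nonzero, r_i ∈ ℚ, ℓ_i ∈ ℕ, and the pairs (r_i,ℓ_i) pairwise distinct. If f(y) → 0 as y → +∞, then r_i < 0 for all i, and there exist r > 0 and y_0 > 1 such that |f(y)| ≤ y^{-r} for all y > y_0. -/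
open Real Finset Filter

/-!
Order the exponent pairs `(rᵢ, ℓᵢ)` lexicographically. Each term `y ^ r * log y ^ ℓ` is
little-o of every lexicographically larger one, so (the pairs being distinct) `f` is asymptotic
to its leading term `c_m y ^ r_m (log y) ^ ℓ_m`. That term tends to `0` only if `r_m < 0`, and then
all `rᵢ ≤ r_m < 0`. Finally, for any `s < 0` above all the `rᵢ`, every term, hence `f`, is
`o(y ^ s)`, which gives the bound with `ρ = -s`.
-/

open Asymptotics

lemma eventually_one_le_log_pow (n : ℕ) : ∀ᶠ y in atTop, 1 ≤ log y ^ n :=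
  (tendsto_log_atTop.eventually_ge_atTop 1).mono fun _ hy => one_le_pow₀ hy

lemma rpow_mul_log_pow_isLittleO_rpow {r s : ℝ} (h : r < s) (n : ℕ) :
    (fun y => y ^ r * log y ^ n) =o[atTop] fun y => y ^ s := by
  have hlog : (fun y => log y ^ n) =o[atTop] fun y => y ^ (s - r) := by
    simpa only [rpow_natCast] using isLittleO_log_rpow_rpow_atTop (n : ℝ) (sub_pos.2 h)
  refine ((isBigO_refl (fun y => y ^ r) atTop).mul_isLittleO hlog).trans_eventuallyEq ?_
  filter_upwards [eventually_gt_atTop 0] with y hy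
  rw [← rpow_add hy, add_sub_cancel]

lemma rpow_isBigO_rpow_mul_log_pow (s : ℝ) (n : ℕ) :
    (fun y => y ^ s) =O[atTop] fun y => y ^ s * log y ^ n := by
  refine IsBigO.of_bound 1 ?_
  filter_upwards [eventually_one_le_log_pow n] with y hy
  rw [one_mul, norm_mul, norm_of_nonneg (zero_le_one.trans hy)]
  exact le_mul_of_one_le_right (norm_nonneg _) hy

lemma rpow_mul_log_pow_isLittleO_of_lex_lt {r s : ℝ} {m n : ℕ}
    (h : toLex (r, m) < toLex (s, n)) :
    (fun y => y ^ r * log y ^ m) =o[atTop] fun y => y ^ s * log y ^ n := by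
  rcases Prod.Lex.toLex_lt_toLex.1 h with hrs | ⟨rfl, hmn⟩
  · exact (rpow_mul_log_pow_isLittleO_rpow hrs m).trans_isBigO (rpow_isBigO_rpow_mul_log_pow s n)
  · exact (isBigO_refl _ _).mul_isLittleO
      ((isLittleO_pow_pow_atTop_of_lt hmn).comp_tendsto tendsto_log_atTop)

lemma neg_of_tendsto_const_mul_rpow_mul_log_pow {c s : ℝ} {n : ℕ} (hc : c ≠ 0)
    (h : Tendsto (fun y => c * (y ^ s * log y ^ n)) atTop (nhds 0)) : s < 0 := by
  by_contra! hs
  have hbound : ∀ᶠ y in atTop, |c| ≤ |c * (y ^ s * log y ^ n)| := by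
    filter_upwards [eventually_ge_atTop 1, eventually_one_le_log_pow n] with y hy hlog
    rw [abs_mul]
    refine le_mul_of_one_le_right (abs_nonneg c) ?_
    rw [abs_of_nonneg (by positivity)]
    exact one_le_mul_of_one_le_of_one_le (one_le_rpow hy hs) hlog
  have hc0 : |c| ≤ |0| := ge_of_tendsto h.abs hbound
  exact hc (abs_nonpos_iff.1 (by simpa using hc0))

lemma sum_const_mul_isEquivalent_of_isLittleO {α ι 𝕜 : Type*} [Fintype ι] [DecidableEq ι]
    [NormedField 𝕜] {l : Filter α} {g : ι → α → 𝕜} {c : ι → 𝕜} {m : ι} (hc : c m ≠ 0)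
    (h : ∀ j ≠ m, g j =o[l] g m) :
    (fun x => ∑ j, c j * g j x) ~[l] fun x => c m * g m x := by
  have hrest : (fun x => ∑ j ∈ univ.erase m, c j * g j x) =o[l] fun x => c m * g m x :=
    IsLittleO.fun_sum fun j hj =>
      ((h j (ne_of_mem_erase hj)).const_mul_left (c j)).const_mul_right hc
  refine hrest.congr_left fun x => ?_
  rw [Pi.sub_apply, ← add_sum_erase _ _ (mem_univ m), add_sub_cancel_left]

lemma exists_lt_forall_lt_of_forall_lt {ι : Type*} [Finite ι] {r : ι → ℝ} {a : ℝ}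
    (hr : ∀ i, r i < a) : ∃ s < a, ∀ i, r i < s := by
  have hgt : ∀ᶠ s in nhdsWithin a (Set.Iio a), ∀ i, r i < s :=
    eventually_all.2 fun i => (eventually_gt_nhds (hr i)).filter_mono nhdsWithin_le_nhds
  exact (eventually_mem_nhdsWithin.and hgt).exists

theorem decay_rate_one_var (k : ℕ) (r : Fin k → ℚ) (ℓ : Fin k → ℕ) (c : Fin k → ℝ)
    (hc : ∀ i, c i ≠ 0)
    (hdist : ∀ i j, i ≠ j → (r i, ℓ i) ≠ (r j, ℓ j))
    (hlim : Tendsto (fun y : ℝ => ∑ i, c i * y ^ ((r i : ℝ)) * (Real.log y) ^ (ℓ i))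
      atTop (nhds 0)) :
    (∀ i, (r i : ℝ) < 0) ∧
    ∃ ρ : ℝ, 0 < ρ ∧ ∃ y₀ : ℝ, 1 < y₀ ∧ ∀ y : ℝ, y₀ < y →
      |∑ i, c i * y ^ ((r i : ℝ)) * (Real.log y) ^ (ℓ i)| ≤ y ^ (-ρ) := by
  simp only [mul_assoc] at hlim ⊢
  have hneg : ∀ i, (r i : ℝ) < 0 := by
    intro i
    obtain ⟨m, -, hm⟩ := univ.exists_max_image (fun j => toLex ((r j : ℝ), ℓ j)) ⟨i, mem_univ i⟩
    have hlt : ∀ j ≠ m, toLex ((r j : ℝ), ℓ j) < toLex ((r m : ℝ), ℓ m) := fun j hj =>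
      (hm j (mem_univ j)).lt_of_ne (by simpa using hdist j m hj)
    have hm0 : (r m : ℝ) < 0 := neg_of_tendsto_const_mul_rpow_mul_log_pow (hc m)
      ((sum_const_mul_isEquivalent_of_isLittleO (hc m) fun j hj =>
        rpow_mul_log_pow_isLittleO_of_lex_lt (hlt j hj)).tendsto_nhds hlim)
    exact (Prod.Lex.monotone_fst _ _ (hm i (mem_univ i))).trans_lt hm0
  obtain ⟨s, hs, hrs⟩ := exists_lt_forall_lt_of_forall_lt hneg
  have hdecay : (fun y : ℝ => ∑ i, c i * (y ^ (r i : ℝ) * log y ^ ℓ i)) =o[atTop] fun y => y ^ s :=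
    IsLittleO.fun_sum fun i _ => (rpow_mul_log_pow_isLittleO_rpow (hrs i) (ℓ i)).const_mul_left _
  obtain ⟨y₁, hy₁⟩ := eventually_atTop.1 ((hdecay.bound one_pos).and (eventually_gt_atTop 1))
  refine ⟨hneg, -s, neg_pos.2 hs, max y₁ 2, by norm_num, fun y hy => ?_⟩
  obtain ⟨hbound, hy1⟩ := hy₁ y (le_of_max_le_left hy.le)
  rw [neg_neg]
  rwa [one_mul, norm_eq_abs, norm_of_nonneg (rpow_nonneg (zero_le_one.trans hy1.le) s)] at hbound
end

section
/- Let f(y) = Σ_{i=1}^k c_i y^{r_i} (log y)^{ℓ_i} on (0,1), where c_i ∈ ℝ are all nonzero, r_i ∈ ℚ, ℓ_i ∈ ℕ, and the pairs (r_i, ℓ_i) are pairwise distinct. Then f is Lebesgue integrable on (0,1) if and only if r_i > −1 for every i. -/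
/-!
Near `0⁺` the terms `y ^ r * (log y) ^ ℓ` are totally ordered by growth: a smaller exponent
wins, and for equal exponents a larger power of the logarithm wins. Since the pairs `(r i, ℓ i)`
are distinct and the coefficients nonzero, the sum is asymptotically equivalent to its unique
dominant term `c i₀ * y ^ r i₀ * (log y) ^ ℓ i₀`, so integrability of the sum near `0` forces
that of the dominant term, i.e. `r i₀ > -1`, and `r i₀` is the smallest exponent. Conversely
each term with `r > -1` is `o(y ^ r')` for any `r' ∈ (-1, r)`.
-/

open Real Finset MeasureTheory Set
open Filter Topology Asymptotics

lemma eventually_one_le_abs_log_nhdsGT_zero : ∀ᶠ y in 𝓝[>] (0:ℝ), 1 ≤ |log y| :=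
  (tendsto_abs_atBot_atTop.comp tendsto_log_nhdsGT_zero).eventually_ge_atTop 1

lemma isBigO_rpow_rpow_mul_log_pow_nhdsGT_zero (s : ℝ) (n : ℕ) :
    (fun y : ℝ => y ^ s) =O[𝓝[>] 0] fun y => y ^ s * log y ^ n := by
  refine IsBigO.of_bound 1 ?_
  filter_upwards [eventually_one_le_abs_log_nhdsGT_zero] with y hy
  rw [one_mul, norm_mul, norm_pow, Real.norm_eq_abs (log y)]
  exact le_mul_of_one_le_right (norm_nonneg _) (one_le_pow₀ hy)

lemma isLittleO_log_pow_rpow_nhdsGT_zero (n : ℕ) {s : ℝ} (hs : s < 0) :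
    (fun y : ℝ => log y ^ n) =o[𝓝[>] 0] fun y => y ^ s := by
  have h := isLittleO_abs_log_rpow_rpow_nhdsGT_zero (n : ℝ) hs
  simp only [rpow_natCast] at h
  exact isLittleO_norm_left.1 (by simpa only [norm_pow, Real.norm_eq_abs] using h)

lemma isLittleO_log_pow_log_pow_nhdsGT_zero {m n : ℕ} (h : m < n) :
    (fun y : ℝ => log y ^ m) =o[𝓝[>] 0] fun y => log y ^ n := by
  have h := (isLittleO_pow_pow_atTop_of_lt (𝕜 := ℝ) h).comp_tendsto
    (tendsto_abs_atBot_atTop.comp tendsto_log_nhdsGT_zero)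
  refine isLittleO_norm_norm.1 ?_
  simpa only [Function.comp_def, norm_pow, Real.norm_eq_abs] using h

lemma isLittleO_rpow_mul_log_pow_nhdsGT_zero {s t : ℝ} {m n : ℕ}
    (h : t < s ∨ t = s ∧ m < n) :
    (fun y : ℝ => y ^ s * log y ^ m) =o[𝓝[>] 0] fun y => y ^ t * log y ^ n := by
  obtain hts | ⟨rfl, hmn⟩ := h
  · refine IsLittleO.trans_isBigO ?_ (isBigO_rpow_rpow_mul_log_pow_nhdsGT_zero t n)
    refine ((isBigO_refl (fun y : ℝ => y ^ s) _).mul_isLittleO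
      (isLittleO_log_pow_rpow_nhdsGT_zero m (sub_neg.2 hts))).congr' .rfl ?_
    filter_upwards [self_mem_nhdsWithin] with y (hy : 0 < y)
    rw [← rpow_add hy, add_sub_cancel]
  · exact (isBigO_refl _ _).mul_isLittleO (isLittleO_log_pow_log_pow_nhdsGT_zero hmn)

lemma continuousOn_rpow_mul_log_pow (s : ℝ) (n : ℕ) :
    ContinuousOn (fun y : ℝ => y ^ s * log y ^ n) (Ioi 0) := by
  fun_prop (disch := intro x hx; exact ne_of_gt hx)

lemma stronglyMeasurableAtFilter_rpow_mul_log_pow_nhdsGT_zero (s : ℝ) (n : ℕ) :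
    StronglyMeasurableAtFilter (fun y : ℝ => y ^ s * log y ^ n) (𝓝[>] 0) :=
  (continuousOn_rpow_mul_log_pow s n).stronglyMeasurableAtFilter_nhdsWithin measurableSet_Ioi 0

lemma integrableAtFilter_rpow_nhdsGT_zero_iff {s : ℝ} :
    IntegrableAtFilter (fun y : ℝ => y ^ s) (𝓝[>] 0) ↔ -1 < s := by
  open intervalIntegral in
  refine ⟨fun ⟨t, ht, hint⟩ ↦ ?_, fun h ↦
    ⟨Ioo 0 1, Ioo_mem_nhdsGT one_pos, (integrableOn_Ioo_rpow_iff one_pos).2 h⟩⟩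
  obtain ⟨u, hu, hsub⟩ := mem_nhdsGT_iff_exists_Ioo_subset.1 ht
  exact (integrableOn_Ioo_rpow_iff hu).1 (hint.mono_set hsub)

lemma integrableAtFilter_rpow_mul_log_pow_nhdsGT_zero_iff {s : ℝ} (n : ℕ) :
    IntegrableAtFilter (fun y : ℝ => y ^ s * log y ^ n) (𝓝[>] 0) ↔ -1 < s := by
  refine ⟨fun h ↦ ?_, fun hs ↦ ?_⟩
  · refine integrableAtFilter_rpow_nhdsGT_zero_iff.1
      ((isBigO_rpow_rpow_mul_log_pow_nhdsGT_zero s n).integrableAtFilter ?_ h)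
    simpa only [pow_zero, mul_one] using
      stronglyMeasurableAtFilter_rpow_mul_log_pow_nhdsGT_zero s 0
  · have hlo : (fun y : ℝ => y ^ s * log y ^ n) =o[𝓝[>] 0]
        fun y => y ^ ((s - 1) / 2) * log y ^ 0 :=
      isLittleO_rpow_mul_log_pow_nhdsGT_zero (Or.inl (by linarith))
    simp only [pow_zero, mul_one] at hlo
    exact hlo.isBigO.integrableAtFilter
      (stronglyMeasurableAtFilter_rpow_mul_log_pow_nhdsGT_zero s n)
      (integrableAtFilter_rpow_nhdsGT_zero_iff.2 (by linarith))

lemma MeasureTheory.IntegrableAtFilter.integrableOn_Ioc_of_continuousOn {E : Type*}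
    [NormedAddCommGroup E] {f : ℝ → E} {a b : ℝ} (hf : IntegrableAtFilter f (𝓝[>] a))
    (hc : ContinuousOn f (Ioc a b)) :
    IntegrableOn f (Ioc a b) := by
  obtain ⟨t, ht, hint⟩ := hf
  obtain ⟨u, hu, hsub⟩ := mem_nhdsGT_iff_exists_Ioo_subset.1 ht
  have hIcc : IntegrableOn f (Icc u b) :=
    (hc.mono fun x hx ↦ ⟨hu.trans_le hx.1, hx.2⟩).integrableOn_Icc
  refine ((hint.mono_set hsub).union hIcc).mono_set fun x hx ↦ ?_
  obtain hxu | hux := lt_or_ge x u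
  exacts [Or.inl ⟨hx.1, hxu⟩, Or.inr ⟨hux, hx.2⟩]

lemma integrableOn_Ioc_rpow_mul_log_pow {s : ℝ} (hs : -1 < s) (n : ℕ) (b : ℝ) :
    IntegrableOn (fun y : ℝ => y ^ s * log y ^ n) (Ioc 0 b) :=
  ((integrableAtFilter_rpow_mul_log_pow_nhdsGT_zero_iff n).2 hs).integrableOn_Ioc_of_continuousOn
    ((continuousOn_rpow_mul_log_pow s n).mono Ioc_subset_Ioi_self)

lemma isEquivalent_sum_of_isLittleO {α ι β : Type*} [DecidableEq ι] [NormedAddCommGroup β]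
    {l : Filter α} {s : Finset ι} {i₀ : ι} (hi₀ : i₀ ∈ s) (F : ι → α → β)
    (h : ∀ i ∈ s, i ≠ i₀ → F i =o[l] F i₀) : (fun x ↦ ∑ i ∈ s, F i x) ~[l] F i₀ := by
  have hsplit : (fun x ↦ ∑ i ∈ s, F i x) - F i₀ = fun x ↦ ∑ i ∈ s.erase i₀, F i x := by
    ext x
    rw [Pi.sub_apply, ← add_sum_erase s _ hi₀, add_sub_cancel_left]
  rw [IsEquivalent, hsplit]
  exact IsLittleO.fun_sum fun i hi ↦ h i (mem_of_mem_erase hi) (ne_of_mem_erase hi)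

lemma exists_forall_ne_lt_or_eq_and_gt {ι α β : Type*} [Fintype ι] [Nonempty ι]
    [LinearOrder α] [LinearOrder β] (a : ι → α) (b : ι → β)
    (hab : Function.Injective fun i ↦ (a i, b i)) :
    ∃ i₀, ∀ i ≠ i₀, a i₀ < a i ∨ a i₀ = a i ∧ b i < b i₀ := by
  obtain ⟨i₀, -, hmin⟩ :=
    exists_min_image univ (fun i ↦ toLex (a i, OrderDual.toDual (b i))) univ_nonempty
  refine ⟨i₀, fun i hi ↦ Prod.Lex.toLex_lt_toLex.1 ((hmin i (mem_univ i)).lt_of_ne ?_)⟩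
  intro heq
  exact hi (hab (by simpa using heq.symm))

theorem integrable_sum_iff_each_term (k : ℕ) (r : Fin k → ℚ) (ℓ : Fin k → ℕ)
    (c : Fin k → ℝ) (hc : ∀ i, c i ≠ 0)
    (hdist : ∀ i j, i ≠ j → (r i, ℓ i) ≠ (r j, ℓ j)) :
    IntegrableOn (fun y : ℝ => ∑ i, c i * y ^ ((r i : ℝ)) * (Real.log y) ^ (ℓ i))
        (Ioo (0:ℝ) 1) volume ↔
      ∀ i, (r i : ℝ) > -1 := by
  simp only [mul_assoc]
  set g : Fin k → ℝ → ℝ := fun i y ↦ y ^ (r i : ℝ) * log y ^ ℓ i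
  refine ⟨fun hf i ↦ ?_, fun hr ↦ integrable_finsetSum _ fun i _ ↦ ?_⟩
  · have : Nonempty (Fin k) := ⟨i⟩
    obtain ⟨i₀, hi₀⟩ := exists_forall_ne_lt_or_eq_and_gt r ℓ
      fun i j hij ↦ by_contra fun hne ↦ hdist i j hne hij
    have hsum : (fun y ↦ ∑ j, c j * g j y) ~[𝓝[>] 0] fun y ↦ c i₀ * g i₀ y :=
      isEquivalent_sum_of_isLittleO (mem_univ i₀) (fun j y ↦ c j * g j y) fun j _ hj ↦
        ((isLittleO_rpow_mul_log_pow_nhdsGT_zero (by exact_mod_cast hi₀ j hj)).const_mul_left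
          (c j)).const_mul_right (hc i₀)
    have hg₀ : IntegrableAtFilter (g i₀) (𝓝[>] 0) :=
      ((isBigO_self_const_mul (hc i₀) _ _).trans hsum.isBigO_symm).integrableAtFilter
        (stronglyMeasurableAtFilter_rpow_mul_log_pow_nhdsGT_zero _ _)
        ⟨Ioo 0 1, Ioo_mem_nhdsGT one_pos, hf⟩
    have hri₀ : (r i₀ : ℝ) ≤ r i := by
      obtain rfl | hi := eq_or_ne i i₀
      · exact le_rfl
      · exact_mod_cast (hi₀ i hi).elim le_of_lt fun h ↦ h.1.le
    exact ((integrableAtFilter_rpow_mul_log_pow_nhdsGT_zero_iff _).1 hg₀).trans_le hri₀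
  · exact ((integrableOn_Ioc_rpow_mul_log_pow (hr i) _ 1).mono_set Ioo_subset_Ioc_self).const_mul
      (c i)
end
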